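/- Suppose T_Z is invertible and ‖A(m,n)x‖_m ≤ M(m/n)^a‖x‖_n for m ≥ n. Then there exist D, λ > 0 such that ‖A(m,n)x‖_m ≤ D(m/n)^{−λ}‖x‖_n for all m ≥ n and x ∈ X(n). (One can take λ = 1/log N_0 and D = Le for appropriate L and N_0.) -/
import Mathlib


open scoped BigOperators

variable {X : Type*} [NormedAddCommGroup X] [NormedSpace ℝ X]

/-- The cocycle generated by a sequence of bounded operators:
`coc A n m = 𝓐(m,n) = A_{m-1} ⋯ A_n` for `m > n`, and `= Id` for `m ≤ n`. -/
def coc (A : ℕ → X →L[ℝ] X) (n : ℕ) : ℕ → X →L[ℝ] X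
  | 0 => 1
  | m + 1 => if n ≤ m then (A m).comp (coc A n m) else 1

/-- The formal difference operator: `(T x)_1 = 0` and
`(T x)_{m+1} = (m+1)(x_{m+1} - A_m x_m)` for `m ≥ 1`. -/
noncomputable def TOp (A : ℕ → X →L[ℝ] X) (x : ℕ → X) : ℕ → X :=
  fun m => if m ≤ 1 then 0 else (m : ℝ) • (x m - A (m - 1) (x (m - 1)))

/-- `N` is a family (indexed by `m ≥ 1`) of norms on `X`, each equivalent to `‖·‖`. -/
def NormFamily (N : ℕ → X → ℝ) : Prop :=
  ∀ m, 1 ≤ m →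
    (∀ x y : X, N m (x + y) ≤ N m x + N m y) ∧
    (∀ (c : ℝ) (x : X), N m (c • x) = |c| * N m x) ∧
    (∃ c C : ℝ, 0 < c ∧ ∀ x : X, c * ‖x‖ ≤ N m x ∧ N m x ≤ C * ‖x‖)

/-- Membership in `Y`: `sup_{m ≥ 1} ‖x_m‖_m < ∞`. -/
def MemY (N : ℕ → X → ℝ) (x : ℕ → X) : Prop :=
  ∃ S : ℝ, ∀ m, 1 ≤ m → N m (x m) ≤ S

/-- Membership in `Y₀ = Y_{{0}}`: bounded and `x_1 = 0`. -/
def MemY0 (N : ℕ → X → ℝ) (x : ℕ → X) : Prop := x 1 = 0 ∧ MemY N x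

/-- Membership in `Y_Z`: bounded and `x_1 ∈ Z`. -/
def MemYZ (N : ℕ → X → ℝ) (Z : Set X) (x : ℕ → X) : Prop := x 1 ∈ Z ∧ MemY N x

/-- Membership in the domain `𝒟(T_Z)`: `x ∈ Y_Z` and
`sup_{m ≥ 1} (m+1)‖x_{m+1} - A_m x_m‖_{m+1} < ∞`. -/
def MemD (A : ℕ → X →L[ℝ] X) (N : ℕ → X → ℝ) (Z : Set X) (x : ℕ → X) : Prop :=
  MemYZ N Z x ∧ MemY N (TOp A x)

/-- Polynomial dichotomy (with given projections and constants) with respect to the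
sequence of norms `N`.  The bound along the unstable direction is stated in the
equivalent "forward" form: `‖u‖_m ≤ D (m/n)^λ ‖𝓐(n,m)u‖_n` for `u ∈ Ker P_m`, `m ≤ n`. -/
def PolyDichWith (A : ℕ → X →L[ℝ] X) (N : ℕ → X → ℝ) (P : ℕ → X →L[ℝ] X)
    (D lam : ℝ) : Prop :=
  (∀ m, 1 ≤ m → (P m).comp (P m) = P m) ∧
  (∀ m, 1 ≤ m → (A m).comp (P m) = (P (m + 1)).comp (A m)) ∧
  (∀ m, 1 ≤ m → ∀ y, P (m + 1) y = 0 → ∃! x, P m x = 0 ∧ A m x = y) ∧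
  (∀ m n, 1 ≤ n → n ≤ m → ∀ x : X,
      N m (coc A n m (P n x)) ≤ D * (((m : ℝ) / (n : ℝ)) ^ (-lam)) * N n x) ∧
  (∀ m n, 1 ≤ m → m ≤ n → ∀ u : X, P m u = 0 →
      N m u ≤ D * (((m : ℝ) / (n : ℝ)) ^ lam) * N n (coc A m n u))

/-- `(A_m)` admits a polynomial dichotomy with respect to the sequence of norms `N`. -/
def PolyDich (A : ℕ → X →L[ℝ] X) (N : ℕ → X → ℝ) : Prop :=
  ∃ (P : ℕ → X →L[ℝ] X) (D lam : ℝ), 0 < D ∧ 0 < lam ∧ PolyDichWith A N P D lam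

/-- The stable space `X(n) = {x : sup_{m ≥ n} ‖𝓐(m,n)x‖_m < ∞}`. -/
def Xs (A : ℕ → X →L[ℝ] X) (N : ℕ → X → ℝ) (n : ℕ) : Set X :=
  {x : X | ∃ S : ℝ, ∀ m, n ≤ m → N m (coc A n m x) ≤ S}

/-- The unstable space `Z(n) = 𝓐(n,1) Z`. -/
def Zs (A : ℕ → X →L[ℝ] X) (Z : Set X) (n : ℕ) : Set X := coc A 1 n '' Z

/-- `T_Z : 𝒟(T_Z) → Y₀` is invertible, with `κ` a bound for the norm of its inverse
(with respect to the graph norm on the domain). -/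
def TInv (A : ℕ → X →L[ℝ] X) (N : ℕ → X → ℝ) (Z : Set X) (κ : ℝ) : Prop :=
  (∀ y, MemY0 N y → ∃ x, MemD A N Z x ∧ ∀ m, 1 ≤ m → TOp A x m = y m) ∧
  (∀ x x', MemD A N Z x → MemD A N Z x' →
      (∀ m, 1 ≤ m → TOp A x m = TOp A x' m) → ∀ m, 1 ≤ m → x m = x' m) ∧
  (∀ y x, MemY0 N y → MemD A N Z x → (∀ m, 1 ≤ m → TOp A x m = y m) →
      ∀ S : ℝ, (∀ m, 1 ≤ m → N m (y m) ≤ S) → ∀ m, 1 ≤ m → N m (x m) ≤ κ * S)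

/-- The uniform polynomial growth bound `‖𝓐(m,n)x‖_m ≤ M (m/n)^a ‖x‖_n` for `m ≥ n`. -/
def Grow (A : ℕ → X →L[ℝ] X) (N : ℕ → X → ℝ) (M a : ℝ) : Prop :=
  ∀ m n, 1 ≤ n → n ≤ m → ∀ x : X,
    N m (coc A n m x) ≤ M * (((m : ℝ) / (n : ℝ)) ^ a) * N n x

section Aux

variable {X : Type*} [NormedAddCommGroup X] [NormedSpace ℝ X]

lemma coc_of_le (A : ℕ → X →L[ℝ] X) {n m : ℕ} (h : m ≤ n) : coc A n m = 1 := by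
  cases m with
  | zero => rfl
  | succ k => rw [coc, if_neg (by omega)]

lemma coc_succ (A : ℕ → X →L[ℝ] X) {n m : ℕ} (h : n ≤ m) :
    coc A n (m + 1) = (A m).comp (coc A n m) := by rw [coc, if_pos h]

lemma coc_comp (A : ℕ → X →L[ℝ] X) {n k : ℕ} (hnk : n ≤ k) :
    ∀ m, k ≤ m → ∀ x : X, coc A n m x = coc A k m (coc A n k x) := by
  intro m hm
  induction m, hm using Nat.le_induction with
  | base => intro x; rw [coc_of_le A le_rfl]; rfl
  | succ m hm ih =>
      intro x
      rw [coc_succ A (hnk.trans hm), coc_succ A hm]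
      simp only [ContinuousLinearMap.comp_apply, ih]

lemma normfam_nonneg {N : ℕ → X → ℝ} (hN : NormFamily N) {m : ℕ} (hm : 1 ≤ m) (v : X) :
    0 ≤ N m v := by
  obtain ⟨c, C, hc, h⟩ := (hN m hm).2.2
  exact le_trans (by positivity) (h v).1

lemma normfam_zero {N : ℕ → X → ℝ} (hN : NormFamily N) {m : ℕ} (hm : 1 ≤ m) :
    N m 0 = 0 := by
  have := (hN m hm).2.1 0 (0 : X)
  simpa using this

lemma log_le_harmonic (n : ℕ) (hn : 1 ≤ n) :
    ∀ m, n ≤ m → Real.log (((m : ℝ) + 1) / ((n : ℝ) + 1)) ≤ ∑ k ∈ Finset.Ioc n m, (1 : ℝ) / k := by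
  intro m hm
  induction m, hm using Nat.le_induction with
  | base => simp [div_self (by positivity : ((n : ℝ) + 1) ≠ 0)]
  | succ m hm ih =>
      have hm0 : (0 : ℝ) < (m : ℝ) + 1 := by positivity
      have hn0 : (0 : ℝ) < (n : ℝ) + 1 := by positivity
      have key : ((m : ℝ) + 1 + 1) / ((n : ℝ) + 1)
          = (((m : ℝ) + 1) / ((n : ℝ) + 1)) * (((m : ℝ) + 2) / ((m : ℝ) + 1)) := by
        field_simp; ring
      rw [Finset.sum_Ioc_succ_top hm]
      have h2 : Real.log (((m : ℝ) + 2) / ((m : ℝ) + 1)) ≤ 1 / ((m : ℝ) + 1) := by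
        have := Real.log_le_sub_one_of_pos (x := ((m : ℝ) + 2) / ((m : ℝ) + 1)) (by positivity)
        have e : ((m : ℝ) + 2) / ((m : ℝ) + 1) - 1 = 1 / ((m : ℝ) + 1) := by field_simp; norm_num
        linarith [this, e ▸ this]
      have h3 : Real.log (((m : ℝ) + 1 + 1) / ((n : ℝ) + 1))
          = Real.log (((m : ℝ) + 1) / ((n : ℝ) + 1)) + Real.log (((m : ℝ) + 2) / ((m : ℝ) + 1)) := by
        rw [key, Real.log_mul (by positivity) (by positivity)]
      push_cast
      push_cast at ih
      rw [h3]
      have : (1 : ℝ) / ((m : ℝ) + 1) = 1 / (((m : ℕ) : ℝ) + 1) := by norm_num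
      linarith [ih, h2]

/-- Key admissibility estimate via the weighted test sequence. -/
lemma key_est (A : ℕ → X →L[ℝ] X) (N : ℕ → X → ℝ) (hN : NormFamily N)
    (Z : Set X) (h0Z : (0 : X) ∈ Z) (κ : ℝ) (hinv : TInv A N Z κ)
    (n : ℕ) (hn : 1 ≤ n) (x : X) (S : ℝ) (hS0 : 0 ≤ S)
    (hS : ∀ m, n ≤ m → N m (coc A n m x) ≤ S) (m₁ : ℕ) (hm₁ : n ≤ m₁) :
    (∑ k ∈ Finset.Ioc n m₁, (1 : ℝ) / k) * N m₁ (coc A n m₁ x) ≤ κ * S := by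
  set c : ℕ → ℝ := fun m => ∑ k ∈ Finset.Ioc n (min m m₁), (1 : ℝ) / k with hc
  set z : ℕ → X := fun m => c m • coc A n m x with hz
  have hc_nonneg : ∀ m, 0 ≤ c m := fun m =>
    Finset.sum_nonneg (fun k _ => by positivity)
  have hc_le : ∀ m, c m ≤ c m₁ := by
    intro m
    apply Finset.sum_le_sum_of_subset_of_nonneg
    · exact Finset.Ioc_subset_Ioc_right (by omega)
    · intro k _ _; positivity
  have hc_zero : ∀ m, m ≤ n → c m = 0 := by
    intro m hmn
    rw [hc]; simp only
    rw [Finset.Ioc_eq_empty (by omega), Finset.sum_empty]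
  have hcm₁ : c m₁ = ∑ k ∈ Finset.Ioc n m₁, (1 : ℝ) / k := by
    rw [hc]; simp
  -- compute TOp A z
  have hTz : ∀ m, 1 ≤ m → TOp A z m = if n + 1 ≤ m ∧ m ≤ m₁ then coc A n m x else 0 := by
    intro m hm
    rcases le_or_gt m 1 with h1 | h1
    · rw [TOp, if_pos h1, if_neg (by omega)]
    · obtain ⟨p, rfl⟩ : ∃ p, m = p + 2 := ⟨m - 2, by omega⟩
      rw [TOp, if_neg (by omega)]
      have hsub : p + 2 - 1 = p + 1 := rfl
      rw [hsub]
      rcases le_or_gt (p + 2) n with hpn | hpn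
      · -- both terms vanish
        have z1 : z (p + 2) = 0 := by
          rw [hz]; simp only; rw [hc_zero _ hpn, zero_smul]
        have z2 : z (p + 1) = 0 := by
          rw [hz]; simp only; rw [hc_zero _ (by omega), zero_smul]
        rw [z1, z2, if_neg (by omega)]
        simp
      · have hnp : n ≤ p + 1 := by omega
        have hcoc : coc A n (p + 2) x = A (p + 1) (coc A n (p + 1) x) := by
          rw [coc_succ A hnp]; rfl
        have hAz : A (p + 1) (z (p + 1)) = c (p + 1) • coc A n (p + 2) x := by
          rw [hz]; simp only [map_smul]; rw [hcoc]
        rcases le_or_gt (p + 2) m₁ with hle | hgt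
        · have hmin2 : min (p + 2) m₁ = p + 2 := min_eq_left hle
          have hmin1 : min (p + 1) m₁ = p + 1 := min_eq_left (by omega)
          have hcsucc : c (p + 2) = c (p + 1) + 1 / ((p : ℝ) + 2) := by
            rw [hc]; simp only [hmin1, hmin2]
            rw [Finset.sum_Ioc_succ_top hnp]
            congr 1; push_cast; ring
          have hdiff : z (p + 2) - A (p + 1) (z (p + 1))
              = (1 / ((p : ℝ) + 2)) • coc A n (p + 2) x := by
            rw [hz]; simp only; rw [hAz, hcsucc, add_smul]
            abel
          rw [hdiff, if_pos ⟨by omega, hle⟩, smul_smul]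
          have : ((p + 2 : ℕ) : ℝ) * (1 / ((p : ℝ) + 2)) = 1 := by
            push_cast; field_simp
          rw [this, one_smul]
        · have hmin2 : min (p + 2) m₁ = m₁ := min_eq_right (by omega)
          have hmin1 : min (p + 1) m₁ = m₁ := min_eq_right (by omega)
          have hceq : c (p + 2) = c (p + 1) := by rw [hc]; simp only [hmin1, hmin2]
          have hdiff : z (p + 2) - A (p + 1) (z (p + 1)) = 0 := by
            rw [hz]; simp only; rw [hAz, hceq, sub_self]
          rw [hdiff, if_neg (by omega), smul_zero]
  have hTbd : ∀ m, 1 ≤ m → N m (TOp A z m) ≤ S := by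
    intro m hm
    rw [hTz m hm]
    split
    · next h => exact hS m (by omega)
    · rw [normfam_zero hN hm]; exact hS0
  have hy0 : MemY0 N (TOp A z) := by
    refine ⟨by rw [TOp, if_pos le_rfl], ⟨S, hTbd⟩⟩
  have hzD : MemD A N Z z := by
    refine ⟨⟨?_, ⟨c m₁ * S, ?_⟩⟩, ⟨S, hTbd⟩⟩
    · have : z 1 = 0 := by rw [hz]; simp only; rw [hc_zero _ hn, zero_smul]
      rw [this]; exact h0Z
    · intro m hm
      have hsmul : N m (z m) = c m * N m (coc A n m x) := by
        rw [hz]; simp only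
        rw [(hN m hm).2.1, abs_of_nonneg (hc_nonneg m)]
      rw [hsmul]
      rcases le_or_gt n m with hnm | hnm
      · exact mul_le_mul (hc_le m) (hS m hnm) (normfam_nonneg hN hm _)
          (le_trans (hc_nonneg m₁) (le_refl _))
      · rw [hc_zero m (by omega), zero_mul]
        exact mul_nonneg (hc_nonneg m₁) hS0
  have hfin := hinv.2.2 (TOp A z) z hy0 hzD (fun m hm => rfl) S hTbd m₁ (by omega)
  have hm₁1 : 1 ≤ m₁ := by omega
  have : N m₁ (z m₁) = c m₁ * N m₁ (coc A n m₁ x) := by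
    rw [hz]; simp only
    rw [(hN m₁ hm₁1).2.1, abs_of_nonneg (hc_nonneg m₁)]
  rw [this, hcm₁] at hfin
  exact hfin

end Aux

set_option maxHeartbeats 1000000 in
/-- if `T_Z` is invertible and the growth bound holds, then there exist
`D, λ > 0` with `‖𝓐(m,n)x‖_m ≤ D(m/n)^{-λ}‖x‖_n` for all `m ≥ n` and `x ∈ X(n)`. -/
theorem stmt10 [CompleteSpace X] (A : ℕ → X →L[ℝ] X) (N : ℕ → X → ℝ)
    (hN : NormFamily N) (Z : Submodule ℝ X) (hZ : IsClosed (Z : Set X))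
    (κ : ℝ) (hinv : TInv A N (Z : Set X) κ)
    (M a : ℝ) (hM : 0 < M) (ha : 0 < a) (hgrow : Grow A N M a) :
    ∃ D lam : ℝ, 0 < D ∧ 0 < lam ∧
      ∀ m n, 1 ≤ n → n ≤ m → ∀ x ∈ Xs A N n,
        N m (coc A n m x) ≤ D * (((m : ℝ) / (n : ℝ)) ^ (-lam)) * N n x := by
  classical
  set κ' : ℝ := max κ 1 with hκ'
  have hκ'1 : (1 : ℝ) ≤ κ' := le_max_right _ _
  have hκ'0 : (0 : ℝ) < κ' := lt_of_lt_of_le one_pos hκ'1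
  have hκκ' : κ ≤ κ' := le_max_left _ _
  -- first scale N₀
  set N₀ : ℕ := ⌈2 * Real.exp (2 * κ')⌉₊ with hN₀def
  have hN₀ : 2 * Real.exp (2 * κ') ≤ (N₀ : ℝ) := Nat.le_ceil _
  have hexp1 : (1 : ℝ) ≤ Real.exp (2 * κ') := by
    rw [← Real.exp_zero]; exact Real.exp_le_exp.mpr (by positivity)
  have hN₀2 : (2 : ℝ) ≤ (N₀ : ℝ) := by nlinarith
  have hN₀1 : 1 ≤ N₀ := by exact_mod_cast (by linarith : (1:ℝ) ≤ (N₀:ℝ))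
  set L : ℝ := M * (N₀ : ℝ) ^ a with hLdef
  have hN₀pos : (0 : ℝ) < (N₀ : ℝ) := by linarith
  have hL : 0 < L := mul_pos hM (Real.rpow_pos_of_pos hN₀pos a)
  -- ratio estimate : (m+1)/(n+1) ≥ K/2 when m ≥ K n, n ≥ 1
  have hratio : ∀ (K n m : ℕ), 1 ≤ n → K * n ≤ m →
      (K : ℝ) / 2 ≤ ((m : ℝ) + 1) / ((n : ℝ) + 1) := by
    intro K n m hn hKm
    have h1 : (1 : ℝ) ≤ (n : ℝ) := by exact_mod_cast hn
    have h2 : ((K : ℝ)) * (n : ℝ) ≤ (m : ℝ) := by exact_mod_cast hKm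
    rw [div_le_div_iff₀ (by norm_num) (by positivity)]
    have hK0 : (0 : ℝ) ≤ (K : ℝ) := by positivity
    nlinarith
  -- Step A : uniform boundedness
  have hA : ∀ n, 1 ≤ n → ∀ x ∈ Xs A N n, ∀ m, n ≤ m →
      N m (coc A n m x) ≤ L * N n x := by
    intro n hn x hx
    obtain ⟨S₀, hS₀⟩ := hx
    set T : Set ℝ := (fun m => N m (coc A n m x)) '' Set.Ici n with hT
    have hTne : T.Nonempty := ⟨_, ⟨n, Set.mem_Ici.mpr le_rfl, rfl⟩⟩
    have hTbdd : BddAbove T := ⟨S₀, by rintro _ ⟨m', hm', rfl⟩; exact hS₀ m' hm'⟩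
    set s : ℝ := sSup T with hs
    have hle_s : ∀ m, n ≤ m → N m (coc A n m x) ≤ s :=
      fun m hm => le_csSup hTbdd ⟨m, Set.mem_Ici.mpr hm, rfl⟩
    have hxnn : 0 ≤ N n x := normfam_nonneg hN hn x
    have hs0 : 0 ≤ s := by
      have := hle_s n le_rfl
      rw [coc_of_le A le_rfl] at this
      exact le_trans (normfam_nonneg hN hn x) this
    have hkey : ∀ m₁, n ≤ m₁ →
        (∑ k ∈ Finset.Ioc n m₁, (1 : ℝ) / k) * N m₁ (coc A n m₁ x) ≤ κ' * s := by
      intro m₁ hm₁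
      have := key_est A N hN (Z : Set X) (Submodule.zero_mem Z) κ hinv n hn x s hs0 hle_s m₁ hm₁
      calc (∑ k ∈ Finset.Ioc n m₁, (1 : ℝ) / k) * N m₁ (coc A n m₁ x) ≤ κ * s := this
        _ ≤ κ' * s := mul_le_mul_of_nonneg_right hκκ' hs0
    have hbound : ∀ m, n ≤ m → N m (coc A n m x) ≤ max (L * N n x) (s / 2) := by
      intro m hm
      rcases lt_or_ge m (N₀ * n) with hlt | hge
      · refine le_max_of_le_left ?_
        have hg := hgrow m n hn hm x
        have hmn : ((m : ℝ) / (n : ℝ)) ≤ (N₀ : ℝ) := by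
          rw [div_le_iff₀ (by exact_mod_cast hn : (0:ℝ) < (n:ℝ))]
          exact_mod_cast le_trans (Nat.le_of_lt hlt) (le_refl (N₀ * n))
        have hpow : ((m : ℝ) / (n : ℝ)) ^ a ≤ (N₀ : ℝ) ^ a :=
          Real.rpow_le_rpow (by positivity) hmn (le_of_lt ha)
        calc N m (coc A n m x) ≤ M * (((m : ℝ) / (n : ℝ)) ^ a) * N n x := hg
          _ ≤ M * ((N₀ : ℝ) ^ a) * N n x := by
              apply mul_le_mul_of_nonneg_right _ hxnn
              exact mul_le_mul_of_nonneg_left hpow (le_of_lt hM)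
          _ = L * N n x := rfl
      · refine le_max_of_le_right ?_
        have hlog : 2 * κ' ≤ ∑ k ∈ Finset.Ioc n m, (1 : ℝ) / k := by
          have h1 := log_le_harmonic n hn m (le_trans (Nat.le_mul_of_pos_left n (by omega)) hge)
          have h2 : (N₀ : ℝ) / 2 ≤ ((m : ℝ) + 1) / ((n : ℝ) + 1) := hratio N₀ n m hn hge
          have h3 : Real.exp (2 * κ') ≤ (N₀ : ℝ) / 2 := by linarith
          have h4 : 2 * κ' ≤ Real.log ((N₀ : ℝ) / 2) := by
            rw [← Real.log_exp (2 * κ')]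
            exact Real.log_le_log (Real.exp_pos _) h3
          have h5 : Real.log ((N₀ : ℝ) / 2) ≤ Real.log (((m : ℝ) + 1) / ((n : ℝ) + 1)) :=
            Real.log_le_log (by positivity) h2
          linarith
        have hk := hkey m hm
        have hNnn := normfam_nonneg hN (le_trans hn hm) (coc A n m x)
        nlinarith
    have hsle : s ≤ max (L * N n x) (s / 2) := by
      apply csSup_le hTne
      rintro _ ⟨m', hm', rfl⟩
      exact hbound m' hm'
    rcases le_max_iff.mp hsle with h | h
    · exact fun m hm => le_trans (hle_s m hm) h
    · have : s ≤ 0 := by linarith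
      intro m hm
      exact le_trans (le_trans (hle_s m hm) this) (by positivity)
  -- second scale N₁
  set L'' : ℝ := max L 1 with hL''def
  have hL''1 : (1 : ℝ) ≤ L'' := le_max_right _ _
  have hL''0 : (0 : ℝ) < L'' := lt_of_lt_of_le one_pos hL''1
  have hLL'' : L ≤ L'' := le_max_left _ _
  set E : ℝ := Real.exp 1 with hEdef
  have hE1 : (1 : ℝ) ≤ E := by
    rw [hEdef, ← Real.exp_zero]; exact Real.exp_le_exp.mpr (by norm_num)
  have hE0 : (0 : ℝ) < E := lt_of_lt_of_le one_pos hE1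
  set N₁ : ℕ := ⌈2 * Real.exp (E * κ' * L'')⌉₊ with hN₁def
  have hN₁ : 2 * Real.exp (E * κ' * L'') ≤ (N₁ : ℝ) := Nat.le_ceil _
  have hexp1' : (1 : ℝ) ≤ Real.exp (E * κ' * L'') := by
    rw [← Real.exp_zero]; exact Real.exp_le_exp.mpr (by positivity)
  have hN₁2 : (2 : ℝ) ≤ (N₁ : ℝ) := by nlinarith
  have hN₁1 : 1 ≤ N₁ := by exact_mod_cast (by linarith : (1:ℝ) ≤ (N₁:ℝ))
  have hN₁pos : (0 : ℝ) < (N₁ : ℝ) := by linarith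
  -- Xs propagation
  have hprop : ∀ n k, n ≤ k → ∀ x ∈ Xs A N n, coc A n k x ∈ Xs A N k := by
    intro n k hnk x hx
    obtain ⟨S₀, hS₀⟩ := hx
    refine ⟨S₀, fun m hm => ?_⟩
    rw [← coc_comp A hnk m hm x]
    exact hS₀ m (le_trans hnk hm)
  -- Step B : contraction at scale N₁
  have hB : ∀ n, 1 ≤ n → ∀ x ∈ Xs A N n, ∀ m, N₁ * n ≤ m →
      E * N m (coc A n m x) ≤ N n x := by
    intro n hn x hx m hm
    have hnm : n ≤ m := le_trans (Nat.le_mul_of_pos_left n (by omega)) hm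
    have hxnn : 0 ≤ N n x := normfam_nonneg hN hn x
    have hSb : ∀ m', n ≤ m' → N m' (coc A n m' x) ≤ L * N n x := fun m' hm' => hA n hn x hx m' hm'
    have hkey := key_est A N hN (Z : Set X) (Submodule.zero_mem Z) κ hinv n hn x
      (L * N n x) (by positivity) hSb m hnm
    have hstep : (∑ k ∈ Finset.Ioc n m, (1 : ℝ) / k) * N m (coc A n m x) ≤ κ' * (L'' * N n x) := by
      calc (∑ k ∈ Finset.Ioc n m, (1 : ℝ) / k) * N m (coc A n m x) ≤ κ * (L * N n x) := hkey
        _ ≤ κ' * (L * N n x) := mul_le_mul_of_nonneg_right hκκ' (by positivity)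
        _ ≤ κ' * (L'' * N n x) := by
            apply mul_le_mul_of_nonneg_left _ (le_of_lt hκ'0)
            exact mul_le_mul_of_nonneg_right hLL'' hxnn
    have hlog : E * κ' * L'' ≤ ∑ k ∈ Finset.Ioc n m, (1 : ℝ) / k := by
      have h1 := log_le_harmonic n hn m hnm
      have h2 : (N₁ : ℝ) / 2 ≤ ((m : ℝ) + 1) / ((n : ℝ) + 1) := hratio N₁ n m hn hm
      have h3 : Real.exp (E * κ' * L'') ≤ (N₁ : ℝ) / 2 := by linarith
      have h4 : E * κ' * L'' ≤ Real.log ((N₁ : ℝ) / 2) := by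
        rw [← Real.log_exp (E * κ' * L'')]
        exact Real.log_le_log (Real.exp_pos _) h3
      have h5 : Real.log ((N₁ : ℝ) / 2) ≤ Real.log (((m : ℝ) + 1) / ((n : ℝ) + 1)) :=
        Real.log_le_log (by positivity) h2
      linarith
    have hNnn := normfam_nonneg hN (le_trans hn hnm) (coc A n m x)
    have h6 : E * κ' * L'' * N m (coc A n m x) ≤ κ' * (L'' * N n x) :=
      le_trans (mul_le_mul_of_nonneg_right hlog hNnn) hstep
    have h7 : κ' * L'' * (E * N m (coc A n m x)) ≤ κ' * L'' * N n x := by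
      calc κ' * L'' * (E * N m (coc A n m x)) = E * κ' * L'' * N m (coc A n m x) := by ring
        _ ≤ κ' * (L'' * N n x) := h6
        _ = κ' * L'' * N n x := by ring
    exact le_of_mul_le_mul_left h7 (by positivity)
  -- Step C : iteration
  have hC : ∀ j : ℕ, ∀ n, 1 ≤ n → ∀ x ∈ Xs A N n, ∀ m, N₁ ^ j * n ≤ m →
      E ^ j * N m (coc A n m x) ≤ L * N n x := by
    intro j
    induction j with
    | zero =>
        intro n hn x hx m hm
        simpa using hA n hn x hx m (by simpa using hm)
    | succ j ih =>
        intro n hn x hx m hm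
        set k : ℕ := N₁ * n with hkdef
        have hk1 : 1 ≤ k := by rw [hkdef]; exact le_trans hn (Nat.le_mul_of_pos_left n (by omega))
        have hnk : n ≤ k := Nat.le_mul_of_pos_left n (by omega)
        have hkm : N₁ ^ j * k ≤ m := by
          have : N₁ ^ (j + 1) * n = N₁ ^ j * k := by rw [hkdef]; ring
          omega
        have hx' : coc A n k x ∈ Xs A N k := hprop n k hnk x hx
        have hih := ih k hk1 (coc A n k x) hx' m hkm
        have hcc : coc A k m (coc A n k x) = coc A n m x := by
          rw [← coc_comp A hnk m (le_trans (Nat.le_mul_of_pos_left k (by positivity)) hkm) x]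
        rw [hcc] at hih
        have hBk : E * N k (coc A n k x) ≤ N n x := hB n hn x hx k le_rfl
        have hNnn := normfam_nonneg hN (le_trans hk1 (le_trans (Nat.le_mul_of_pos_left k (by positivity)) hkm)) (coc A n m x)
        calc E ^ (j + 1) * N m (coc A n m x) = E * (E ^ j * N m (coc A n m x)) := by ring
          _ ≤ E * (L * N k (coc A n k x)) := by
              exact mul_le_mul_of_nonneg_left hih (le_of_lt hE0)
          _ = L * (E * N k (coc A n k x)) := by ring
          _ ≤ L * N n x := mul_le_mul_of_nonneg_left hBk (le_of_lt hL)
  -- conclusion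
  have hlogN₁ : 0 < Real.log (N₁ : ℝ) := Real.log_pos (by linarith)
  refine ⟨E * L, 1 / Real.log (N₁ : ℝ), by positivity, by positivity, ?_⟩
  intro m n hn hm x hx
  set lam : ℝ := 1 / Real.log (N₁ : ℝ) with hlam
  have hnpos : (0 : ℝ) < (n : ℝ) := by exact_mod_cast hn
  have hmn1 : (1 : ℝ) ≤ (m : ℝ) / (n : ℝ) := by
    rw [le_div_iff₀ hnpos]; simpa using (by exact_mod_cast hm : (n : ℝ) ≤ (m : ℝ))
  have hmnpos : (0 : ℝ) < (m : ℝ) / (n : ℝ) := lt_of_lt_of_le one_pos hmn1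
  have hlog0 : 0 ≤ Real.log ((m : ℝ) / (n : ℝ)) := Real.log_nonneg hmn1
  set j : ℕ := ⌊Real.log ((m : ℝ) / (n : ℝ)) / Real.log (N₁ : ℝ)⌋₊ with hj
  have hj1 : (j : ℝ) * Real.log (N₁ : ℝ) ≤ Real.log ((m : ℝ) / (n : ℝ)) := by
    have := Nat.floor_le (by positivity : 0 ≤ Real.log ((m : ℝ) / (n : ℝ)) / Real.log (N₁ : ℝ))
    calc (j : ℝ) * Real.log (N₁ : ℝ)
        ≤ (Real.log ((m : ℝ) / (n : ℝ)) / Real.log (N₁ : ℝ)) * Real.log (N₁ : ℝ) :=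
          mul_le_mul_of_nonneg_right this (le_of_lt hlogN₁)
      _ = Real.log ((m : ℝ) / (n : ℝ)) := by field_simp
  have hpowj : ((N₁ : ℝ)) ^ j ≤ (m : ℝ) / (n : ℝ) := by
    have hpos : (0 : ℝ) < (N₁ : ℝ) ^ j := by positivity
    rw [← Real.log_le_log_iff hpos hmnpos, Real.log_pow]
    exact hj1
  have hnatj : N₁ ^ j * n ≤ m := by
    have : ((N₁ ^ j * n : ℕ) : ℝ) ≤ (m : ℝ) := by
      push_cast
      calc ((N₁ : ℝ)) ^ j * (n : ℝ) ≤ ((m : ℝ) / (n : ℝ)) * (n : ℝ) :=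
            mul_le_mul_of_nonneg_right hpowj (le_of_lt hnpos)
        _ = (m : ℝ) := by field_simp
    exact_mod_cast this
  have hmain := hC j n hn x hx m hnatj
  have hj2 : Real.log ((m : ℝ) / (n : ℝ)) / Real.log (N₁ : ℝ) < (j : ℝ) + 1 :=
    Nat.lt_floor_add_one _
  have hj3 : lam * Real.log ((m : ℝ) / (n : ℝ)) - 1 < (j : ℝ) := by
    rw [hlam]
    have : Real.log ((m : ℝ) / (n : ℝ)) / Real.log (N₁ : ℝ)
        = 1 / Real.log (N₁ : ℝ) * Real.log ((m : ℝ) / (n : ℝ)) := by ring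
    linarith [this ▸ hj2]
  have hEj : E ^ j = Real.exp (j : ℝ) := Real.exp_one_pow j
  have hNnn := normfam_nonneg hN (le_trans hn hm) (coc A n m x)
  have hxnn : 0 ≤ N n x := normfam_nonneg hN hn x
  have hexple : Real.exp (lam * Real.log ((m : ℝ) / (n : ℝ)) - 1) ≤ E ^ j := by
    rw [hEj]
    exact Real.exp_le_exp.mpr (le_of_lt hj3)
  have h8 : Real.exp (lam * Real.log ((m : ℝ) / (n : ℝ)) - 1) * N m (coc A n m x) ≤ L * N n x :=
    le_trans (mul_le_mul_of_nonneg_right hexple hNnn) hmain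
  have hrpow : ((m : ℝ) / (n : ℝ)) ^ (-lam) = Real.exp (-(lam * Real.log ((m : ℝ) / (n : ℝ)))) := by
    rw [Real.rpow_def_of_pos hmnpos]
    ring_nf
  have h9 : N m (coc A n m x)
      ≤ Real.exp (-(lam * Real.log ((m : ℝ) / (n : ℝ)) - 1)) * (L * N n x) := by
    have hpos := Real.exp_pos (lam * Real.log ((m : ℝ) / (n : ℝ)) - 1)
    rw [Real.exp_neg, ← div_eq_inv_mul, le_div_iff₀ hpos]
    exact le_of_eq_of_le (mul_comm _ _) h8
  calc N m (coc A n m x)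
      ≤ Real.exp (-(lam * Real.log ((m : ℝ) / (n : ℝ)) - 1)) * (L * N n x) := h9
    _ = E * L * (((m : ℝ) / (n : ℝ)) ^ (-lam)) * N n x := by
        rw [hrpow]
        rw [show -(lam * Real.log ((m : ℝ) / (n : ℝ)) - 1)
            = 1 + -(lam * Real.log ((m : ℝ) / (n : ℝ))) by ring]
        rw [Real.exp_add, hEdef]
        ring
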